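/- arXiv:math/0603317 — 2 statements merged into one kernel-verified Lean document; each statement's English description precedes it below -/
import Mathlib

section
/- For s > 1, the k-th time derivative at the origin of u(x,t) = ∫₀^∞ exp(-ρx²/2 + iρt - ρ^{1/s}) dρ satisfies D_t^k u(0,0) = ∫₀^∞ ρ^k exp(-ρ^{1/s}) dρ = s·Γ(s(k+1)), and in particular there exist constants C, c > 0 with c^k (k!)^s ≤ |D_t^k u(0,0)| ≤ C^{k+1} (k!)^s for all k ∈ ℕ. -/
/-!
Differentiating under the integral sign, `(-i)^k ∂_t^k u(0,0)` is the `k`-th moment of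
`e^{-ρ^{1/s}}` on `(0, ∞)`, which the substitution `ρ = σ^s` turns into `s Γ(s(k+1))`.
For the lower bound, `s + k` is the `1/s`-interpolant of `s(k+1)` and `s`, so log-convexity
of `Γ` together with `Γ(s + k) ≥ Γ(s) k!` gives `Γ(s) (k!)^s ≤ Γ(s(k+1))`.
For the upper bound, `Γ(y) ≤ (2y)^y` (from `x^{y-1} ≤ (2y)^{y-1} e^{x/2}`) and `n^n ≤ eⁿ n!`
give `Γ(s(k+1)) ≤ ((4es)^s)^{k+1} (k!)^s`.
-/

open MeasureTheory Complex Real Set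
open scoped Nat

section FourierMoments

variable {μ : Measure ℝ} {g : ℝ → ℂ}

theorem norm_I_mul_pow_mul_cexp_mul (k : ℕ) (t ρ : ℝ) (z : ℂ) :
    ‖(I * ρ) ^ k * cexp (I * ρ * t) * z‖ = ‖ρ ^ k • z‖ := by
  simp [Complex.norm_exp]

theorem integrable_I_mul_pow_mul_cexp_mul
    (hg : ∀ n : ℕ, Integrable (fun ρ => ρ ^ n • g ρ) μ) (k : ℕ) (t : ℝ) :
    Integrable (fun ρ : ℝ => (I * ρ) ^ k * cexp (I * ρ * t) * g ρ) μ := by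
  have hgm : AEStronglyMeasurable g μ := by simpa using (hg 0).aestronglyMeasurable
  refine (hg k).mono ?_ (.of_forall fun ρ => (norm_I_mul_pow_mul_cexp_mul k t ρ (g ρ)).le)
  have hcont : Continuous fun ρ : ℝ => (I * ρ) ^ k * cexp (I * ρ * t) := by fun_prop
  exact hcont.aestronglyMeasurable.mul hgm

theorem hasDerivAt_I_mul_pow_mul_cexp_mul (k : ℕ) (ρ t : ℝ) (z : ℂ) :
    HasDerivAt (fun t : ℝ => (I * ρ) ^ k * cexp (I * ρ * t) * z)
      ((I * ρ) ^ (k + 1) * cexp (I * ρ * t) * z) t := by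
  have := (((hasDerivAt_id (t : ℂ)).const_mul (I * ρ)).cexp.comp_ofReal.const_mul
    ((I * ρ) ^ k)).mul_const z
  refine this.congr_deriv ?_
  simp only [id, mul_one]
  ring

theorem iteratedDeriv_integral_cexp_mul
    (hg : ∀ n : ℕ, Integrable (fun ρ => ρ ^ n • g ρ) μ) (k : ℕ) :
    iteratedDeriv k (fun t : ℝ => ∫ ρ, cexp (I * ρ * t) * g ρ ∂μ) =
      fun t : ℝ => ∫ ρ, (I * ρ) ^ k * cexp (I * ρ * t) * g ρ ∂μ := by
  induction k with
  | zero => simp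
  | succ k ih =>
    rw [iteratedDeriv_succ, ih]
    funext t
    have hint := integrable_I_mul_pow_mul_cexp_mul hg
    refine (hasDerivAt_integral_of_dominated_loc_of_deriv_le Filter.univ_mem
      (.of_forall fun t => (hint k t).aestronglyMeasurable) (hint k t)
      (hint (k + 1) t).aestronglyMeasurable
      (.of_forall fun ρ t _ => (norm_I_mul_pow_mul_cexp_mul (k + 1) t ρ (g ρ)).le)
      (hg (k + 1)).norm
      (.of_forall fun ρ t _ => hasDerivAt_I_mul_pow_mul_cexp_mul k ρ t (g ρ))).2.deriv

end FourierMoments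

namespace Real

theorem integrableOn_pow_mul_exp_neg_rpow {p : ℝ} (hp : 0 < p) (k : ℕ) :
    IntegrableOn (fun ρ : ℝ => ρ ^ k * exp (-ρ ^ p)) (Ioi 0) := by
  simpa only [rpow_natCast] using
    integrableOn_rpow_mul_exp_neg_rpow (s := k) (by linarith [k.cast_nonneg (α := ℝ)]) hp

theorem integral_pow_mul_exp_neg_rpow_inv {s : ℝ} (hs : 0 < s) (k : ℕ) :
    ∫ ρ in Ioi (0 : ℝ), ρ ^ k * exp (-ρ ^ (1 / s)) = s * Gamma (s * (k + 1)) := by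
  have := integral_rpow_mul_exp_neg_rpow (p := 1 / s) (q := k) (by positivity)
    (by linarith [k.cast_nonneg (α := ℝ)])
  simp only [rpow_natCast] at this
  rw [this, one_div_one_div, div_eq_mul_inv, one_div, inv_inv, mul_comm (_ + 1)]

theorem Gamma_mul_factorial_le_Gamma_add_nat {s : ℝ} (hs : 1 ≤ s) (k : ℕ) :
    Gamma s * k ! ≤ Gamma (s + k) := by
  induction k with
  | zero => simp
  | succ k ih =>
    calc Gamma s * (k + 1)! = (k + 1 : ℝ) * (Gamma s * k !) := by
          push_cast [Nat.factorial_succ]; ring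
      _ ≤ (s + k) * Gamma (s + k) := mul_le_mul (by linarith) ih (by positivity) (by positivity)
      _ = Gamma (s + (k + 1 : ℕ)) := by
          rw [Nat.cast_succ, ← add_assoc, Gamma_add_one (by positivity)]

theorem Gamma_mul_factorial_rpow_le {s : ℝ} (hs : 1 < s) (k : ℕ) :
    Gamma s * (k ! : ℝ) ^ s ≤ Gamma (s * (k + 1)) := by
  have hs0 : 0 < s := by linarith
  set G := Gamma s
  set X := Gamma (s * (k + 1))
  have hG : 0 < G := Gamma_pos_of_pos hs0
  have hX : 0 < X := Gamma_pos_of_pos (by positivity)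
  have holder : Gamma (s + k) ≤ X ^ s⁻¹ * G ^ (1 - s⁻¹) := by
    have := Gamma_mul_add_mul_le_rpow_Gamma_mul_rpow_Gamma (s := s * (k + 1)) (t := s)
      (by positivity) hs0 (inv_pos.2 hs0) (sub_pos.2 (inv_lt_one_of_one_lt₀ hs)) (by ring)
    rwa [show s⁻¹ * (s * (k + 1)) + (1 - s⁻¹) * s = s + k by field_simp; ring] at this
  have key : G ^ s⁻¹ * k ! ≤ X ^ s⁻¹ := by
    refine le_of_mul_le_mul_left ?_ (by positivity : 0 < G ^ (1 - s⁻¹))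
    calc G ^ (1 - s⁻¹) * (G ^ s⁻¹ * k !) = G * k ! := by
          rw [← mul_assoc, ← rpow_add hG, sub_add_cancel, rpow_one]
      _ ≤ Gamma (s + k) := Gamma_mul_factorial_le_Gamma_add_nat hs.le k
      _ ≤ G ^ (1 - s⁻¹) * X ^ s⁻¹ := by rwa [mul_comm]
  calc G * (k ! : ℝ) ^ s = (G ^ s⁻¹ * k !) ^ s := by
        rw [mul_rpow (by positivity) (by positivity), rpow_inv_rpow hG.le hs0.ne']
    _ ≤ (X ^ s⁻¹) ^ s := by gcongr
    _ = X := rpow_inv_rpow hX.le hs0.ne'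

theorem factorial_rpow_le_mul_Gamma {s : ℝ} (hs : 1 < s) (k : ℕ) :
    (k ! : ℝ) ^ s ≤ s * Gamma (s * (k + 1)) := by
  have hs0 : 0 < s := by linarith
  have hGamma : 1 ≤ s * Gamma s := by
    rw [← Gamma_add_one hs0.ne']
    exact Gamma_two.symm.le.trans <| Gamma_strictMonoOn_Ici.monotoneOn
      (by norm_num) (by simp only [mem_Ici]; linarith) (by linarith)
  calc (k ! : ℝ) ^ s ≤ s * Gamma s * (k ! : ℝ) ^ s :=
        le_mul_of_one_le_left (by positivity) hGamma
    _ ≤ s * Gamma (s * (k + 1)) := by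
        rw [mul_assoc]; exact mul_le_mul_of_nonneg_left (Gamma_mul_factorial_rpow_le hs k) hs0.le

theorem rpow_sub_one_le_mul_exp_half {x y : ℝ} (hx : 0 ≤ x) (hy : 1 ≤ y) :
    x ^ (y - 1) ≤ (2 * y) ^ (y - 1) * exp (x / 2) := by
  have hy0 : 0 < y := by linarith
  calc x ^ (y - 1) = (2 * y) ^ (y - 1) * (x / (2 * y)) ^ (y - 1) := by
        rw [← mul_rpow (by positivity) (by positivity), mul_div_cancel₀ _ (by positivity)]
    _ ≤ (2 * y) ^ (y - 1) * exp (x / (2 * y)) ^ (y - 1) := by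
        gcongr; linarith [add_one_le_exp (x / (2 * y))]
    _ ≤ (2 * y) ^ (y - 1) * exp (x / 2) := by
        rw [← exp_mul]
        gcongr
        rw [div_mul_eq_mul_div, div_le_div_iff₀ (by positivity) two_pos]
        nlinarith

theorem Gamma_le_two_mul_rpow_self {y : ℝ} (hy : 1 ≤ y) : Gamma y ≤ (2 * y) ^ y := by
  have hy0 : 0 < y := by linarith
  have hdecay : IntegrableOn (fun x => exp (-(1 / 2) * x)) (Ioi 0) :=
    integrableOn_exp_mul_Ioi (by norm_num) 0
  calc Gamma y = ∫ x in Ioi 0, exp (-x) * x ^ (y - 1) := Gamma_eq_integral hy0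
    _ ≤ ∫ x in Ioi 0, (2 * y) ^ (y - 1) * exp (-(1 / 2) * x) := by
        refine setIntegral_mono_on (GammaIntegral_convergent hy0) (hdecay.const_mul _)
          measurableSet_Ioi fun x hx => ?_
        calc exp (-x) * x ^ (y - 1) ≤ exp (-x) * ((2 * y) ^ (y - 1) * exp (x / 2)) := by
              gcongr; exact rpow_sub_one_le_mul_exp_half (le_of_lt hx) hy
          _ = (2 * y) ^ (y - 1) * exp (-(1 / 2) * x) := by
              rw [mul_left_comm, ← exp_add]; ring_nf
    _ = (2 * y) ^ (y - 1) * 2 := by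
        rw [integral_const_mul, integral_exp_mul_Ioi (by norm_num)]; norm_num
    _ ≤ (2 * y) ^ (y - 1) * (2 * y) := by gcongr; linarith
    _ = (2 * y) ^ y := by rw [← rpow_add_one (by positivity), sub_add_cancel]

theorem add_one_pow_add_one_le_mul_factorial (k : ℕ) :
    ((k : ℝ) + 1) ^ (k + 1) ≤ (2 * exp 1) ^ (k + 1) * k ! := by
  have hstirling : ((k : ℝ) + 1) ^ (k + 1) ≤ exp 1 ^ (k + 1) * (k + 1 : ℕ)! := by
    have := pow_div_factorial_le_exp (x := ((k + 1 : ℕ) : ℝ)) (by positivity) (k + 1)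
    rw [div_le_iff₀ (by positivity), ← exp_one_pow] at this
    exact_mod_cast this
  have hsucc : ((k + 1 : ℕ)! : ℝ) ≤ 2 ^ (k + 1) * k ! := by
    rw [Nat.factorial_succ, Nat.cast_mul]
    gcongr
    exact_mod_cast (Nat.lt_two_pow_self (n := k + 1)).le
  calc ((k : ℝ) + 1) ^ (k + 1) ≤ exp 1 ^ (k + 1) * (2 ^ (k + 1) * k !) :=
        hstirling.trans (by gcongr)
    _ = (2 * exp 1) ^ (k + 1) * k ! := by ring

theorem Gamma_mul_add_one_le {s : ℝ} (hs : 1 ≤ s) (k : ℕ) :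
    Gamma (s * (k + 1)) ≤ ((4 * exp 1 * s) ^ s) ^ (k + 1) * (k ! : ℝ) ^ s := by
  have hs0 : 0 < s := by linarith
  calc Gamma (s * (k + 1)) ≤ (2 * (s * (k + 1))) ^ (s * (k + 1)) :=
        Gamma_le_two_mul_rpow_self (by nlinarith [k.cast_nonneg (α := ℝ)])
    _ = ((2 * s) ^ (k + 1) * ((k : ℝ) + 1) ^ (k + 1)) ^ s := by
        rw [← mul_pow, ← rpow_pow_comm (by positivity), ← rpow_mul_natCast (by positivity)]
        push_cast; ring_nf
    _ ≤ ((2 * s) ^ (k + 1) * ((2 * exp 1) ^ (k + 1) * k !)) ^ s := by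
        gcongr; exact add_one_pow_add_one_le_mul_factorial k
    _ = ((4 * exp 1 * s) ^ s) ^ (k + 1) * (k ! : ℝ) ^ s := by
        rw [← mul_assoc, ← mul_pow, mul_rpow (by positivity) (by positivity),
          ← rpow_pow_comm (by positivity)]
        ring_nf

theorem mul_Gamma_mul_add_one_le {s : ℝ} (hs : 1 ≤ s) (k : ℕ) :
    s * Gamma (s * (k + 1)) ≤ (s * (4 * exp 1 * s) ^ s) ^ (k + 1) * (k ! : ℝ) ^ s := by
  calc s * Gamma (s * (k + 1))
        ≤ s ^ (k + 1) * (((4 * exp 1 * s) ^ s) ^ (k + 1) * (k ! : ℝ) ^ s) :=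
        mul_le_mul (le_self_pow₀ hs k.succ_ne_zero) (Gamma_mul_add_one_le hs k)
          (Gamma_pos_of_pos (by positivity)).le (by positivity)
    _ = (s * (4 * exp 1 * s) ^ s) ^ (k + 1) * (k ! : ℝ) ^ s := by ring

end Real

/-- For s > 1 and u(x,t) = ∫₀^∞ exp(-ρx²/2 + iρt - ρ^{1/s}) dρ, the k-th time
derivative D_t^k u(0,0) (with D_t = (1/i)∂_t, so D_t^k = (-i)^k ∂_t^k) equals
∫₀^∞ ρ^k e^{-ρ^{1/s}} dρ = s·Γ(s(k+1)), and there are constants C, c > 0 with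
c^k (k!)^s ≤ |D_t^k u(0,0)| ≤ C^{k+1} (k!)^s for all k. -/
theorem time_derivatives_of_gevrey_solution (s : ℝ) (hs : 1 < s)
    (u : ℝ → ℝ → ℂ)
    (hu : ∀ x t : ℝ, u x t =
      ∫ ρ in Set.Ioi (0 : ℝ),
        Complex.exp (-(ρ * x ^ 2 / 2 : ℝ) + Complex.I * (ρ : ℂ) * (t : ℂ)
          - (ρ ^ (1 / s) : ℝ))) :
    (∀ k : ℕ,
      (-Complex.I) ^ k * iteratedDeriv k (fun t : ℝ => u 0 t) 0
        = ((∫ ρ in Set.Ioi (0 : ℝ), ρ ^ k * Real.exp (-(ρ ^ (1 / s)))) : ℝ)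
      ∧ (-Complex.I) ^ k * iteratedDeriv k (fun t : ℝ => u 0 t) 0
        = ((s * Real.Gamma (s * (k + 1)) : ℝ) : ℂ))
    ∧ ∃ C c : ℝ, 0 < C ∧ 0 < c ∧ ∀ k : ℕ,
        c ^ k * ((k.factorial : ℝ) ^ s)
          ≤ ‖(-Complex.I) ^ k * iteratedDeriv k (fun t : ℝ => u 0 t) 0‖
        ∧ ‖(-Complex.I) ^ k * iteratedDeriv k (fun t : ℝ => u 0 t) 0‖
          ≤ C ^ (k + 1) * ((k.factorial : ℝ) ^ s) := by
  have hs0 : 0 < s := by linarith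
  set g : ℝ → ℂ := fun ρ => (Real.exp (-ρ ^ (1 / s)) : ℂ)
  have hg (n : ℕ) : Integrable (fun ρ : ℝ => ρ ^ n • g ρ) (volume.restrict (Ioi 0)) := by
    simpa [g] using (integrableOn_pow_mul_exp_neg_rpow (one_div_pos.2 hs0) n).ofReal (𝕜 := ℂ)
  have hu0 : (fun t : ℝ => u 0 t) =
      fun t : ℝ => ∫ ρ in Ioi (0 : ℝ), cexp (I * ρ * t) * g ρ := by
    funext t
    simp [hu, g, ← Complex.exp_add, sub_eq_add_neg]
  have hmoment (k : ℕ) : (-I) ^ k * iteratedDeriv k (fun t : ℝ => u 0 t) 0 =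
      ((∫ ρ in Ioi (0 : ℝ), ρ ^ k * Real.exp (-ρ ^ (1 / s)) : ℝ) : ℂ) := by
    rw [hu0, iteratedDeriv_integral_cexp_mul hg k, ← integral_const_mul,
      ← integral_complex_ofReal]
    congr 1
    funext ρ
    simp [g, ← mul_assoc, ← mul_pow]
  have hGamma (k : ℕ) : (-I) ^ k * iteratedDeriv k (fun t : ℝ => u 0 t) 0 =
      ((s * Real.Gamma (s * (k + 1)) : ℝ) : ℂ) := by
    rw [hmoment k, integral_pow_mul_exp_neg_rpow_inv hs0 k]
  refine ⟨fun k => ⟨hmoment k, hGamma k⟩, s * (4 * Real.exp 1 * s) ^ s, 1, by positivity,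
    one_pos, fun k => ?_⟩
  rw [hGamma k, norm_real, norm_of_nonneg (by positivity), one_pow, one_mul]
  exact ⟨factorial_rpow_le_mul_Gamma hs k, mul_Gamma_mul_add_one_le hs.le k⟩
end

section
/- For the operator P = Σ_{j=1}^ν D_{t_j}² + |t|²|D_s|² - ν|D_s| + D_y + iy|D_s|, on Σ₁ = {t = τ = 0} the sum of the subprincipal symbol and the positive trace is q(y,η,σ) = η + iy|σ| (the terms -ν|σ| and +ν|σ| = tr⁺p₂ cancel). The Poisson bracket condition (1/i){q̄, q} = 2|σ| > 0 holds on Σ₂ = {t = τ = 0, y = η = 0, σ ≠ 0}. -/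
open Complex ComplexConjugate

/-!
The symbol `q = η + i y |σ|` is affine in `(y, η)` with `∂_η q = 1` and `∂_y q = i |σ|`, so the
bracket is `(1/i) (conj a * b - conj b * a)` for `a = 1`, `b = i |σ|`; this expression is always
`2 Im (conj a * b)`, here `2 |σ|`.
-/

theorem deriv_conj_comp (f : ℝ → ℂ) (x : ℝ) :
    deriv (fun t => conj (f t)) x = conj (deriv f x) :=
  deriv.star

theorem deriv_ofReal_add_const (c : ℂ) (x : ℝ) : deriv (fun t : ℝ => (t : ℂ) + c) x = 1 :=
  (ofRealCLM.hasDerivAt.add_const c).deriv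

theorem deriv_const_add_mul_ofReal_mul (c a b : ℂ) (x : ℝ) :
    deriv (fun t : ℝ => c + a * t * b) x = a * b := by
  have h := ((ofRealCLM.hasDerivAt (x := x)).const_mul a |>.mul_const b).const_add c
  simpa using h.deriv

theorem one_div_I_mul_conj_mul_sub (a b : ℂ) :
    1 / I * (conj a * b - conj b * a) = 2 * ((conj a * b).im : ℂ) := by
  have h : conj b * a = conj (conj a * b) := by simp [mul_comm]
  rw [h, sub_conj]
  push_cast
  field_simp

/-- For the model operator, on Σ₁ the subprincipal symbol plus positive trace is
q(y,η,σ) = η + iy|σ| (the terms -ν|σ| and tr⁺p₂ = ν|σ| cancel), and the bracket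
condition (1/i){q̄,q} = 2|σ| > 0 holds for σ ≠ 0, where
{f,g} = ∂_η f ∂_y g - ∂_y f ∂_η g. -/
theorem model_lower_order_term_bracket (ν m : ℕ) (y η : ℝ)
    (σ : EuclideanSpace ℝ (Fin m)) :
    ((-(ν : ℂ) * (‖σ‖ : ℂ) + (η : ℂ) + Complex.I * (y : ℂ) * (‖σ‖ : ℂ))
        + (ν : ℂ) * (‖σ‖ : ℂ) = (η : ℂ) + Complex.I * (y : ℂ) * (‖σ‖ : ℂ))
    ∧ (σ ≠ 0 →
        (1 / Complex.I) *
          (deriv (fun η' : ℝ =>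
              (starRingEnd ℂ) ((η' : ℂ) + Complex.I * (y : ℂ) * (‖σ‖ : ℂ))) η *
            deriv (fun y' : ℝ => ((η : ℂ) + Complex.I * (y' : ℂ) * (‖σ‖ : ℂ))) y
          - deriv (fun y' : ℝ =>
              (starRingEnd ℂ) ((η : ℂ) + Complex.I * (y' : ℂ) * (‖σ‖ : ℂ))) y *
            deriv (fun η' : ℝ => ((η' : ℂ) + Complex.I * (y : ℂ) * (‖σ‖ : ℂ))) η)
          = 2 * (‖σ‖ : ℂ)
        ∧ 0 < 2 * ‖σ‖) := by
  refine ⟨by ring, fun hσ => ⟨?_, mul_pos two_pos (norm_pos_iff.mpr hσ)⟩⟩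
  rw [deriv_conj_comp, deriv_conj_comp, deriv_ofReal_add_const, deriv_const_add_mul_ofReal_mul,
    one_div_I_mul_conj_mul_sub]
  simp
end
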